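/- arXiv:math/0101242 — 6 statements merged into one kernel-verified Lean document; each statement's English description precedes it below -/
import Mathlib

section
/- Let p be a prime and m a positive integer with gcd(m, p) = 1. Suppose f : ZMod p → ℂ satisfies f(0) = 0, f(1) = 1, f(x)^m = 1 for all x ≠ 0, and ∑_{x ∈ ZMod p} f(x)·conj(f(x+h)) = -1 for every h ≠ 0. Then f is completely multiplicative: f(x·y) = f(x)·f(y) for all x, y ∈ ZMod p. -/
/-!
Write the nonzero values of `f` as powers `ζ ^ e x` of a primitive `m`-th root of unity `ζ ∈ ℂ`
and replace `ζ` by a primitive `m`-th root of unity `ξ` in the algebraic closure of `𝔽_p`, which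
exists because `p ∤ m`. An integer polynomial vanishing at `ζ` is a multiple of the `m`-th
cyclotomic polynomial, so it also vanishes at `ξ`; this carries Cohn's condition over to
`F = ξ ^ e`, with complex conjugation becoming inversion. Whether `x ↦ ζ ^ e x` is multiplicative
only depends on `e` modulo `m`, so it suffices to show that `F` is multiplicative.

In characteristic `p`, expand `F` along the characters `x ↦ x ^ i` (`i < p - 1`):
`F w = -∑ cᵢ w⁻ⁱ` with `cᵢ = ∑ₓ F x xⁱ`, and likewise for `G = F⁻¹`. Let `a`, `b` be the smallest
indices where these coefficients do not vanish. Cohn's condition says that the correlation of `F`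
and `G` is constant; expanding `∑ₓ ∑ᵧ F x G y (y - x) ^ n` binomially for `n = a + b` and
`n = p - 1` gives `a + b = p - 1`, the point being that `(a + b).choose b` is a unit mod `p` when
`a + b < p`. Comparing with `F G = 1` then bounds the largest such indices by `a' + b' ≤ p - 1`,
so `c` is supported at the single index `a`, and `F w = w⁻ᵃ` is multiplicative.
-/

open Finset Polynomial

namespace ZMod

variable {p : ℕ} [Fact p.Prime]

theorem sum_pow_card_sub_one : ∑ x : ZMod p, x ^ (p - 1) = -1 := by
  simp [pow_card_sub_one, Finset.sum_ite, Finset.filter_ne',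
    Nat.cast_sub (Fact.out : p.Prime).one_le]

theorem geom_sum_card_sub_one {w : ZMod p} (hw : w ≠ 0) :
    ∑ j ∈ range (p - 1), w ^ j = if w = 1 then -1 else 0 := by
  split_ifs with h1
  · simp [h1, Nat.cast_sub (Fact.out : p.Prime).one_le]
  · rw [geom_sum_eq h1, pow_card_sub_one_eq_one hw, sub_self, zero_div]

theorem sum_pow_add_card_sub_one_sub_mul_pow {x y : ZMod p} (hx : x ≠ 0) (hy : y ≠ 0) (e : ℕ) :
    ∑ j ∈ range (p - 1), x ^ (e + (p - 1) - j) * y ^ j = if y = x then -x ^ e else 0 := by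
  have hterm : ∀ j ∈ range (p - 1), x ^ (e + (p - 1) - j) * y ^ j = x ^ e * (x⁻¹ * y) ^ j := by
    intro j hj
    rw [pow_sub₀ x hx (by grind), pow_add, pow_card_sub_one_eq_one hx, mul_pow, inv_pow]
    ring
  rw [sum_congr rfl hterm, ← mul_sum, geom_sum_card_sub_one (by simp [hx, hy])]
  rcases eq_or_ne y x with rfl | hyx
  · simp [hx]
  · simp [hyx, inv_mul_eq_one₀ hx, Ne.symm hyx]

end ZMod

lemma inv_eq_pow_sub_one {G : Type*} [DivisionMonoid G] {z : G} {m : ℕ} (hm : m ≠ 0)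
    (hz : z ^ m = 1) : z⁻¹ = z ^ (m - 1) :=
  (eq_inv_of_mul_eq_one_left (by rw [pow_sub_one_mul hm, hz])).symm

lemma IsAlgClosed.exists_isPrimitiveRoot (K : Type*) [Field K] [IsAlgClosed K] (m : ℕ)
    [NeZero (m : K)] : ∃ ξ : K, IsPrimitiveRoot ξ m := by
  have : NeZero m := NeZero.of_neZero_natCast K
  obtain ⟨ξ, hξ⟩ := IsAlgClosed.exists_root (cyclotomic m K)
    (degree_cyclotomic_pos m K (NeZero.pos m)).ne'
  exact ⟨ξ, isRoot_cyclotomic_iff.1 hξ⟩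

namespace IsPrimitiveRoot

variable {M N : Type*} {m : ℕ}

lemma pow_eq_pow_iff [CommMonoid M] [CommMonoid N] {ζ : M} {ξ : N} (hζ : IsPrimitiveRoot ζ m)
    (hξ : IsPrimitiveRoot ξ m) (hm : m ≠ 0) {a b : ℕ} : ζ ^ a = ζ ^ b ↔ ξ ^ a = ξ ^ b := by
  rw [(hζ.isOfFinOrder hm).pow_eq_pow_iff_modEq, (hξ.isOfFinOrder hm).pow_eq_pow_iff_modEq,
    ← hζ.eq_orderOf, ← hξ.eq_orderOf]

lemma aeval_eq_zero [Field M] [CharZero M] [CommRing N] [IsDomain N] {ζ : M} {ξ : N}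
    (hζ : IsPrimitiveRoot ζ m) (hξ : IsPrimitiveRoot ξ m) (hm : 0 < m) {P : ℤ[X]}
    (hP : aeval ζ P = 0) : aeval ξ P = 0 := by
  obtain ⟨Q, rfl⟩ : cyclotomic m ℤ ∣ P :=
    cyclotomic_eq_minpoly hζ hm ▸ minpoly.isIntegrallyClosed_dvd (hζ.isIntegral hm) hP
  rw [map_mul, aeval_def, eval₂_eq_eval_map, map_cyclotomic, (hξ.isRoot_cyclotomic hm).eq_zero,
    zero_mul]

end IsPrimitiveRoot

namespace CohnConverse

section Mellin

variable {p : ℕ} [Fact p.Prime] {k : Type*} [Field k] [Algebra (ZMod p) k]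

local notation "ι" => algebraMap (ZMod p) k

lemma natCast_choose_ne_zero {n j : ℕ} (hn : n < p) (hj : j ≤ n) : (n.choose j : k) ≠ 0 := by
  rw [← map_natCast ι, _root_.map_ne_zero, ne_eq, ZMod.natCast_eq_zero_iff]
  exact (Fact.out : p.Prime).coprime_iff_not_dvd.1
    ((Fact.out : p.Prime).coprime_choose_of_lt hn hj)

/-- For `i < p - 1` the maps `x ↦ x ^ i` are the multiplicative characters of `𝔽_p` (extended by
`0`); `eq_neg_sum_finiteMellin` expands `F` along them with these coefficients. -/
def finiteMellin (F : ZMod p → k) (i : ℕ) : k := ∑ x, F x * ι x ^ i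

lemma finiteMellin_add_card_sub_one {F : ZMod p → k} (hF0 : F 0 = 0) (i : ℕ) :
    finiteMellin F (i + (p - 1)) = finiteMellin F i := by
  refine sum_congr rfl fun x _ ↦ ?_
  rcases eq_or_ne x 0 with rfl | hx
  · simp [hF0]
  · rw [pow_add, ← map_pow ι x (p - 1), ZMod.pow_card_sub_one_eq_one hx, map_one, mul_one]

lemma finiteMellin_const (c : k) (n : ℕ) :
    finiteMellin (fun _ : ZMod p ↦ c) n = c * ι (∑ x : ZMod p, x ^ n) := by
  simp [finiteMellin, map_sum, mul_sum]

lemma sum_algebraMap_pow_mul_pow (x y : ZMod p) (n : ℕ) :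
    ∑ i ∈ range n, ι x ^ i * ι y ^ i = ι (∑ i ∈ range n, (x * y) ^ i) := by
  simp [map_sum, mul_pow]

lemma eq_neg_sum_finiteMellin {F : ZMod p → k} (hF0 : F 0 = 0) {w : ZMod p} (hw : w ≠ 0) :
    F w = -∑ i ∈ range (p - 1), finiteMellin F i * ι w⁻¹ ^ i := by
  simp only [finiteMellin, sum_mul, mul_assoc]
  rw [sum_comm, sum_eq_single w]
  · rw [← mul_sum, sum_algebraMap_pow_mul_pow, mul_inv_cancel₀ hw,
      ZMod.geom_sum_card_sub_one one_ne_zero, if_pos rfl]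
    simp
  · intro x _ hxw
    rcases eq_or_ne x 0 with rfl | hx
    · simp [hF0]
    · rw [← mul_sum, sum_algebraMap_pow_mul_pow, ZMod.geom_sum_card_sub_one
        (mul_ne_zero hx (inv_ne_zero hw)), if_neg (by rwa [mul_inv_eq_one₀ hw]),
        map_zero, mul_zero]
  · simp

lemma sum_mul_finiteMellin_mul_finiteMellin (F G : ZMod p → k) (s : Finset ℕ) (c : ℕ → k)
    (a b : ℕ → ℕ) :
    ∑ j ∈ s, c j * finiteMellin F (a j) * finiteMellin G (b j) =
      ∑ x, ∑ y, F x * G y * ∑ j ∈ s, c j * ι x ^ a j * ι y ^ b j := by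
  calc _ = ∑ j ∈ s, ∑ x, ∑ y, F x * G y * (c j * ι x ^ a j * ι y ^ b j) := by
        refine sum_congr rfl fun j _ ↦ ?_
        rw [mul_assoc, finiteMellin, finiteMellin, sum_mul_sum, mul_sum]
        refine sum_congr rfl fun x _ ↦ ?_
        rw [mul_sum]
        exact sum_congr rfl fun y _ ↦ by ring
    _ = _ := by
        rw [sum_comm]
        refine sum_congr rfl fun x _ ↦ ?_
        rw [sum_comm]
        simp [mul_sum]

lemma sum_choose_mul_finiteMellin (F G : ZMod p → k) (n : ℕ) :
    ∑ j ∈ range (n + 1), (-1) ^ (j + n) * n.choose j * finiteMellin F (n - j) * finiteMellin G j =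
      finiteMellin (fun h ↦ ∑ x, F x * G (x + h)) n := by
  calc _ = ∑ x, ∑ y, F x * G y * (ι y - ι x) ^ n := by
        rw [sum_mul_finiteMellin_mul_finiteMellin]
        refine sum_congr rfl fun x _ ↦ sum_congr rfl fun y _ ↦ ?_
        rw [sub_pow]
        exact congrArg _ (sum_congr rfl fun j _ ↦ by ring)
    _ = ∑ x, ∑ h, F x * G (x + h) * ι h ^ n := by
        refine sum_congr rfl fun x _ ↦ (Fintype.sum_equiv (Equiv.addLeft x) _ _ fun h ↦ ?_).symm
        simp
    _ = _ := by
        rw [sum_comm]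
        simp [finiteMellin, sum_mul]

lemma sum_finiteMellin_mul_finiteMellin {F G : ZMod p → k} (hF0 : F 0 = 0) (hG0 : G 0 = 0)
    (e : ℕ) :
    ∑ j ∈ range (p - 1), finiteMellin F (e + (p - 1) - j) * finiteMellin G j =
      -finiteMellin (F * G) e := by
  calc _ = ∑ x, ∑ y, F x * G y * ι (∑ j ∈ range (p - 1), x ^ (e + (p - 1) - j) * y ^ j) := by
        simpa using sum_mul_finiteMellin_mul_finiteMellin F G _ 1 (fun j ↦ e + (p - 1) - j) id
    _ = ∑ x, -(F x * G x * ι x ^ e) := by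
        refine sum_congr rfl fun x _ ↦ ?_
        rcases eq_or_ne x 0 with rfl | hx
        · simp [hF0]
        rw [sum_eq_single x]
        · simp [ZMod.sum_pow_add_card_sub_one_sub_mul_pow hx hx]
        · intro y _ hyx
          rcases eq_or_ne y 0 with rfl | hy
          · simp [hG0]
          · simp [ZMod.sum_pow_add_card_sub_one_sub_mul_pow hx hy, hyx]
        · simp
    _ = _ := by simp [finiteMellin, sum_neg_distrib]

variable {F G : ZMod p → k} {a b : ℕ}

lemma add_le_of_finiteMellin_eq_zero_of_lt (hC : ∀ h, ∑ x, F x * G (x + h) = -1)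
    (hF : ∀ i < a, finiteMellin F i = 0) (hG : ∀ j < b, finiteMellin G j = 0) :
    a + b ≤ p - 1 := by
  by_contra! hlt
  have h := sum_choose_mul_finiteMellin F G (p - 1)
  rw [sum_eq_zero fun j hj ↦ ?_, funext hC, finiteMellin_const, ZMod.sum_pow_card_sub_one] at h
  · simp at h
  · have := mem_range.1 hj
    rcases lt_or_ge j b with hjb | hjb
    · simp [hG j hjb]
    · simp [hF (p - 1 - j) (by omega)]

lemma le_add_of_finiteMellin_ne_zero (hC : ∀ h, ∑ x, F x * G (x + h) = -1)
    (hF : ∀ i < a, finiteMellin F i = 0) (hG : ∀ j < b, finiteMellin G j = 0)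
    (hFa : finiteMellin F a ≠ 0) (hGb : finiteMellin G b ≠ 0) :
    p - 1 ≤ a + b := by
  by_contra! hlt
  have h := sum_choose_mul_finiteMellin F G (a + b)
  rw [sum_eq_single b, funext hC, finiteMellin_const,
    FiniteField.sum_pow_lt_card_sub_one (ZMod p) _ (by rwa [ZMod.card]), Nat.add_sub_cancel] at h
  · simp only [map_zero, mul_zero] at h
    exact mul_ne_zero (mul_ne_zero (mul_ne_zero (by simp)
      (natCast_choose_ne_zero (p := p) (by omega) (by omega))) hFa) hGb h
  · intro j hj hjb
    have := mem_range.1 hj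
    rcases lt_or_gt_of_ne hjb with hjb | hjb
    · simp [hG j hjb]
    · simp [hF (a + b - j) (by omega)]
  · simp

lemma finiteMellin_mul_eq_zero (hF0 : F 0 = 0) (hFG : ∀ x ≠ 0, F x * G x = 1) {e : ℕ}
    (he : e ≠ 0) (he' : e < p - 1) : finiteMellin (F * G) e = 0 := by
  have h (x : ZMod p) : F x * G x * ι x ^ e = ι x ^ e := by
    rcases eq_or_ne x 0 with rfl | hx
    · simp [hF0, he]
    · simp [hFG x hx]
  calc finiteMellin (F * G) e = ι (∑ x : ZMod p, x ^ e) := by simp [finiteMellin, h, map_sum]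
    _ = 0 := by rw [FiniteField.sum_pow_lt_card_sub_one (ZMod p) _ (by rwa [ZMod.card]), map_zero]

lemma add_le_of_finiteMellin_eq_zero_of_gt {a' b' : ℕ} (hF0 : F 0 = 0) (hG0 : G 0 = 0)
    (hFG : ∀ x ≠ 0, F x * G x = 1) (hab : a + b = p - 1) (ha' : a' < p - 1) (hb' : b' < p - 1)
    (hFa' : finiteMellin F a' ≠ 0) (hGb' : finiteMellin G b' ≠ 0)
    (hFlow : ∀ i < a, finiteMellin F i = 0)
    (hFhigh : ∀ i, a' < i → i < p - 1 → finiteMellin F i = 0)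
    (hGlow : ∀ j < b, finiteMellin G j = 0)
    (hGhigh : ∀ j, b' < j → j < p - 1 → finiteMellin G j = 0) :
    a' + b' ≤ p - 1 := by
  by_contra! hlt
  -- Index sums `i + j` over the two supports lie in `[p - 1, a' + b'] ⊂ [p - 1, 2 (p - 1))`,
  -- so `(a', b')` is the only pair contributing to the index `a' + b' - (p - 1)`.
  have h := sum_finiteMellin_mul_finiteMellin hF0 hG0 (a' + b' - (p - 1))
  rw [sum_eq_single b', finiteMellin_mul_eq_zero hF0 hFG (by omega) (by omega), neg_zero,
    show a' + b' - (p - 1) + (p - 1) - b' = a' by omega] at h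
  · exact mul_ne_zero hFa' hGb' h
  · intro j hj hjb'
    have := mem_range.1 hj
    rcases lt_or_ge j b with hjb | hjb
    · simp [hGlow j hjb]
    rcases lt_or_gt_of_ne hjb' with hjb' | hjb'
    swap
    · simp [hGhigh j hjb' this]
    suffices finiteMellin F (a' + b' - (p - 1) + (p - 1) - j) = 0 by simp [this]
    rcases lt_or_ge (a' + b' - j) (p - 1) with hi | hi
    · exact hFhigh _ (by omega) (by omega)
    · rw [show a' + b' - (p - 1) + (p - 1) - j = a' + b' - j - (p - 1) + (p - 1) by omega,
        finiteMellin_add_card_sub_one hF0]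
      exact hFlow _ (by omega)
  · simp [hb']

lemma exists_finiteMellin_support (hF0 : F 0 = 0) {w : ZMod p} (hw : F w ≠ 0) :
    ∃ a a', a ≤ a' ∧ a' < p - 1 ∧ finiteMellin F a ≠ 0 ∧ finiteMellin F a' ≠ 0 ∧
      (∀ i < a, finiteMellin F i = 0) ∧ ∀ i, a' < i → i < p - 1 → finiteMellin F i = 0 := by
  classical
  set S := (range (p - 1)).filter (finiteMellin F · ≠ 0)
  have hS : S.Nonempty := by
    by_contra hS
    refine hw (eq_neg_sum_finiteMellin hF0 (w := w) (by rintro rfl; exact hw hF0) ▸ ?_)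
    rw [sum_eq_zero fun i hi ↦ ?_, neg_zero]
    rw [not_nonempty_iff_eq_empty, filter_eq_empty_iff] at hS
    rw [not_not.1 (hS hi), zero_mul]
  have hmem (i : ℕ) : i ∈ S ↔ i < p - 1 ∧ finiteMellin F i ≠ 0 := by simp [S]
  have hmin := (hmem _).1 (S.min'_mem hS)
  have hmax := (hmem _).1 (S.max'_mem hS)
  refine ⟨S.min' hS, S.max' hS, min'_le_max' S hS, hmax.1, hmin.2, hmax.2, fun i hi ↦ ?_,
    fun i hi hi' ↦ ?_⟩
  · by_contra hFi
    exact (S.min'_le i ((hmem i).2 ⟨by omega, hFi⟩)).not_gt hi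
  · by_contra hFi
    exact (S.le_max' i ((hmem i).2 ⟨hi', hFi⟩)).not_gt hi

lemma map_mul_of_finiteMellin_eq_zero (hF0 : F 0 = 0) (hF1 : F 1 = 1) (ha : a < p - 1)
    (hF : ∀ i < p - 1, i ≠ a → finiteMellin F i = 0) (x y : ZMod p) :
    F (x * y) = F x * F y := by
  have hval (w : ZMod p) (hw : w ≠ 0) : F w = -finiteMellin F a * ι w⁻¹ ^ a := by
    rw [eq_neg_sum_finiteMellin hF0 hw, sum_eq_single a, neg_mul]
    · exact fun i hi hia ↦ by rw [hF i (mem_range.1 hi) hia, zero_mul]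
    · simp [ha]
  have hFa : -finiteMellin F a = 1 := by simpa [hF1] using (hval 1 one_ne_zero).symm
  rcases eq_or_ne x 0 with rfl | hx
  · simp [hF0]
  rcases eq_or_ne y 0 with rfl | hy
  · simp [hF0]
  rw [hval _ (mul_ne_zero hx hy), hval x hx, hval y hy, hFa]
  simp [mul_pow, mul_comm]

lemma sum_mul_inv_self (hF0 : F 0 = 0) (hF : ∀ x ≠ 0, F x ≠ 0) : ∑ x, F x * (F x)⁻¹ = -1 := by
  calc ∑ x, F x * (F x)⁻¹ = ∑ x : ZMod p, ι (x ^ (p - 1)) := by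
        refine sum_congr rfl fun x _ ↦ ?_
        rw [ZMod.pow_card_sub_one]
        split_ifs with hx
        · simp [hF x hx]
        · simp [not_not.1 hx, hF0]
    _ = -1 := by rw [← map_sum, ZMod.sum_pow_card_sub_one, map_neg, map_one]

theorem map_mul_of_sum_mul_inv_eq_neg_one (hF0 : F 0 = 0) (hF1 : F 1 = 1)
    (hF : ∀ x ≠ 0, F x ≠ 0) (hC : ∀ h ≠ 0, ∑ x, F x * (F (x + h))⁻¹ = -1) (x y : ZMod p) :
    F (x * y) = F x * F y := by
  set G : ZMod p → k := fun x ↦ (F x)⁻¹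
  have hG0 : G 0 = 0 := by simp [G, hF0]
  have hcorr (h : ZMod p) : ∑ x, F x * G (x + h) = -1 := by
    rcases eq_or_ne h 0 with rfl | hh
    · simpa [G] using sum_mul_inv_self hF0 hF
    · exact hC h hh
  obtain ⟨a, a', haa', ha', hFa, hFa', hFlow, hFhigh⟩ :=
    exists_finiteMellin_support hF0 (w := 1) (by simp [hF1])
  obtain ⟨b, b', hbb', hb', hGb, hGb', hGlow, hGhigh⟩ :=
    exists_finiteMellin_support hG0 (w := 1) (by simp [G, hF1])
  have hab : a + b = p - 1 := le_antisymm (add_le_of_finiteMellin_eq_zero_of_lt hcorr hFlow hGlow)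
    (le_add_of_finiteMellin_ne_zero hcorr hFlow hGlow hFa hGb)
  have := add_le_of_finiteMellin_eq_zero_of_gt hF0 hG0 (fun x hx ↦ mul_inv_cancel₀ (hF x hx))
    hab ha' hb' hFa' hGb' hFlow hFhigh hGlow hGhigh
  refine map_mul_of_finiteMellin_eq_zero hF0 hF1 (by omega : a < p - 1) (fun i hi hia ↦ ?_) x y
  rcases lt_or_gt_of_ne hia with hia | hia
  · exact hFlow i hia
  · exact hFhigh i (by omega) hi

end Mellin

section OfExponent

variable {α M : Type*} [Zero α] [DecidableEq α]

def ofExponent [MonoidWithZero M] (z : M) (e : α → ℕ) (x : α) : M :=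
  if x = 0 then 0 else z ^ e x

@[simp]
lemma ofExponent_zero [MonoidWithZero M] (z : M) (e : α → ℕ) : ofExponent z e 0 = 0 := if_pos rfl

lemma ofExponent_of_ne_zero [MonoidWithZero M] (z : M) (e : α → ℕ) {x : α} (hx : x ≠ 0) :
    ofExponent z e x = z ^ e x := if_neg hx

lemma map_ofExponent {N F : Type*} [MonoidWithZero M] [MonoidWithZero N] [FunLike F M N]
    [MonoidWithZeroHomClass F M N] (φ : F) (z : M) (e : α → ℕ) (x : α) :
    φ (ofExponent z e x) = ofExponent (φ z) e x := by
  unfold ofExponent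
  split_ifs <;> simp

lemma inv_ofExponent [GroupWithZero M] (z : M) (e : α → ℕ) (x : α) :
    (ofExponent z e x)⁻¹ = ofExponent z⁻¹ e x := by
  unfold ofExponent
  split_ifs <;> simp

lemma exists_eq_ofExponent [CommRing M] [IsDomain M] {ζ : M} {m : ℕ} [NeZero m]
    (hζ : IsPrimitiveRoot ζ m) {f : α → M} (hf0 : f 0 = 0) (hf : ∀ x ≠ 0, f x ^ m = 1) :
    ∃ e : α → ℕ, f = ofExponent ζ e := by
  have (x : α) : ∃ i, x ≠ 0 → ζ ^ i = f x := by
    rcases eq_or_ne x 0 with rfl | hx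
    · exact ⟨0, fun h ↦ (h rfl).elim⟩
    · obtain ⟨i, -, hi⟩ := hζ.eq_pow_of_pow_eq_one (hf x hx)
      exact ⟨i, fun _ ↦ hi⟩
  choose e he using this
  refine ⟨e, funext fun x ↦ ?_⟩
  rcases eq_or_ne x 0 with rfl | hx
  · simp [hf0]
  · rw [ofExponent_of_ne_zero ζ e hx, he x hx]

variable {N : Type*} {m : ℕ}

lemma aeval_ofExponent_mul_ofExponent_pow [Field M] {z : M} (hm : m ≠ 0) (hz : z ^ m = 1)
    (e : α → ℕ) (x y : α) :
    aeval z (ofExponent X e x * ofExponent (X ^ (m - 1) : ℤ[X]) e y) =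
      ofExponent z e x * (ofExponent z e y)⁻¹ := by
  simp [map_ofExponent, inv_ofExponent, inv_eq_pow_sub_one hm hz]

lemma sum_ofExponent_mul_inv_eq [Field M] [CharZero M] [Field N] {ζ : M} {ξ : N}
    (hζ : IsPrimitiveRoot ζ m) (hξ : IsPrimitiveRoot ξ m) (hm : 0 < m) {γ : Type*}
    (s : Finset γ) (u v : γ → α) (e : α → ℕ) (c : ℤ)
    (h : ∑ i ∈ s, ofExponent ζ e (u i) * (ofExponent ζ e (v i))⁻¹ = c) :
    ∑ i ∈ s, ofExponent ξ e (u i) * (ofExponent ξ e (v i))⁻¹ = c := by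
  set P : ℤ[X] := ∑ i ∈ s, ofExponent X e (u i) * ofExponent (X ^ (m - 1)) e (v i) - c
  have hP := hζ.aeval_eq_zero hξ hm (P := P) ?_
  · simpa [P, aeval_ofExponent_mul_ofExponent_pow hm.ne' hξ.pow_eq_one, sub_eq_zero] using hP
  · simp [P, aeval_ofExponent_mul_ofExponent_pow hm.ne' hζ.pow_eq_one, h]

lemma ofExponent_mul_iff [CommMonoidWithZero M] [CommMonoidWithZero N] {ζ : M} {ξ : N}
    (hζ : IsPrimitiveRoot ζ m) (hξ : IsPrimitiveRoot ξ m) (hm : m ≠ 0) {β : Type*}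
    [MulZeroClass β] [NoZeroDivisors β] [DecidableEq β] (e : β → ℕ) (x y : β) :
    ofExponent ζ e (x * y) = ofExponent ζ e x * ofExponent ζ e y ↔
      ofExponent ξ e (x * y) = ofExponent ξ e x * ofExponent ξ e y := by
  rcases eq_or_ne x 0 with rfl | hx
  · simp
  rcases eq_or_ne y 0 with rfl | hy
  · simp
  simp only [ofExponent_of_ne_zero _ _ (mul_ne_zero hx hy), ofExponent_of_ne_zero _ _ hx,
    ofExponent_of_ne_zero _ _ hy, ← pow_add, hζ.pow_eq_pow_iff hξ hm]

end OfExponent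

end CohnConverse

open CohnConverse

/-- Cohn's converse problem for `F_p` when the nonzero values of `f`
are `m`-th roots of unity with `gcd(m, p) = 1`: such an `f` satisfying Cohn's
condition is completely multiplicative. -/
theorem cohn_converse_of_coprime_roots_of_unity (p : ℕ) [Fact p.Prime]
    (m : ℕ) (hm : 0 < m) (hmp : Nat.gcd m p = 1)
    (f : ZMod p → ℂ) (hf0 : f 0 = 0) (hf1 : f 1 = 1)
    (hfm : ∀ x : ZMod p, x ≠ 0 → f x ^ m = 1)
    (hcohn : ∀ h : ZMod p, h ≠ 0 →
      ∑ x : ZMod p, f x * (starRingEnd ℂ) (f (x + h)) = -1) :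
    ∀ x y : ZMod p, f (x * y) = f x * f y := by
  have : NeZero m := ⟨hm.ne'⟩
  have : NeZero (m : AlgebraicClosure (ZMod p)) := ⟨by
    rw [Ne, CharP.cast_eq_zero_iff _ p]
    exact fun h ↦ (Fact.out : p.Prime).ne_one (Nat.Coprime.eq_one_of_dvd (Nat.Coprime.symm hmp) h)⟩
  obtain ⟨ζ, hζ⟩ : ∃ ζ : ℂ, IsPrimitiveRoot ζ m := ⟨_, Complex.isPrimitiveRoot_exp m hm.ne'⟩
  obtain ⟨ξ, hξ⟩ := IsAlgClosed.exists_isPrimitiveRoot (AlgebraicClosure (ZMod p)) m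
  obtain ⟨e, rfl⟩ := exists_eq_ofExponent hζ hf0 hfm
  have hconj (y : ZMod p) : starRingEnd ℂ (ofExponent ζ e y) = (ofExponent ζ e y)⁻¹ := by
    rcases eq_or_ne y 0 with rfl | hy
    · simp
    · exact (Complex.inv_eq_conj (Complex.norm_eq_one_of_pow_eq_one (hfm y hy) hm.ne')).symm
  have hF1 : ofExponent ξ e 1 = 1 := by
    rw [ofExponent_of_ne_zero _ _ one_ne_zero] at hf1 ⊢
    rwa [← pow_zero ξ, ← hζ.pow_eq_pow_iff hξ hm.ne', pow_zero]
  refine fun x y ↦ (ofExponent_mul_iff hζ hξ hm.ne' e x y).2 ?_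
  refine map_mul_of_sum_mul_inv_eq_neg_one (by simp) hF1
    (fun x hx ↦ by simp [ofExponent_of_ne_zero _ _ hx, hξ.ne_zero hm.ne']) (fun h hh ↦ ?_) x y
  exact_mod_cast sum_ofExponent_mul_inv_eq hζ hξ hm univ id (· + h) e (-1)
    (by simpa [hconj] using hcohn h hh)
end

section
/- Let p be a prime, m a positive integer, and f : ZMod p → ℂ with f(0) = 0, f(x)^m = 1 for all x ≠ 0, and ∑_{x ∈ ZMod p} f(x)·conj(f(x+h)) = -1 for every h ≠ 0. Then for every integer j with gcd(j, m) = 1, the function g : ZMod p → ℂ defined by g(x) = f(x)^j also satisfies g(0) = 0, g(x)^m = 1 for x ≠ 0, and ∑_{x ∈ ZMod p} g(x)·conj(g(x+h)) = -1 for every h ≠ 0. -/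
/-!
Write `t x = f x * conj (f (x + h))`; each `t x` is `0` or an `m`-th root of unity, and
`(f x)^j * conj ((f (x + h))^j) = (t x)^j`. Writing the nonzero `t x` as powers of a primitive
`m`-th root `ζ`, Cohn's condition says that `ζ` is a root of the rational polynomial
`1 + ∑ X^{a x}`. Its minimal polynomial is the cyclotomic polynomial `Φ_m`, which also has
`ζ^j` as a root, so `1 + ∑ (t x)^j = 0` as well.
-/

open Polynomial

theorem IsPrimitiveRoot.aeval_zpow_eq_zero {m : ℕ} (hm : 0 < m) {ζ : ℂ}
    (hζ : IsPrimitiveRoot ζ m) {j : ℤ} (hj : j.gcd m = 1) {P : ℚ[X]} (hP : aeval ζ P = 0) :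
    aeval (ζ ^ j) P = 0 := by
  have hminpoly : minpoly ℚ (ζ ^ j) = minpoly ℚ ζ := by
    rw [← cyclotomic_eq_minpoly_rat hζ hm,
      ← cyclotomic_eq_minpoly_rat (hζ.zpow_of_gcd_eq_one j hj) hm]
  exact aeval_eq_zero_of_dvd_aeval_eq_zero (hminpoly ▸ minpoly.dvd ℚ ζ hP) (minpoly.aeval ℚ _)

theorem mul_conj_eq_zero_or_pow_eq_one {m : ℕ} {a b : ℂ} (ha : a = 0 ∨ a ^ m = 1)
    (hb : b = 0 ∨ b ^ m = 1) : a * starRingEnd ℂ b = 0 ∨ (a * starRingEnd ℂ b) ^ m = 1 := by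
  rcases ha with ha | ha
  · simp [ha]
  rcases hb with hb | hb
  · simp [hb]
  · simp [mul_pow, ← map_pow, ha, hb]

section RootsOfUnitySum

variable {ι : Type*} [Fintype ι] {m : ℕ} {t : ι → ℂ}

theorem ne_one_of_sum_eq_neg_one (ht : ∀ i, t i = 0 ∨ t i ^ m = 1) (hsum : ∑ i, t i = -1) :
    m ≠ 1 := by
  rintro rfl
  have hre : 0 ≤ (∑ i, t i).re := by
    rw [Complex.re_sum]
    refine Finset.sum_nonneg fun i _ => ?_
    rcases ht i with h | h <;> simp_all
  rw [hsum] at hre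
  norm_num at hre

theorem sum_zpow_eq_neg_one_of_gcd_eq_one (hm : 0 < m) (ht : ∀ i, t i = 0 ∨ t i ^ m = 1)
    (hsum : ∑ i, t i = -1) {j : ℤ} (hj : j.gcd m = 1) :
    ∑ i, t i ^ j = -1 := by
  have hj0 : j ≠ 0 := by
    rintro rfl
    exact ne_one_of_sum_eq_neg_one ht hsum (by simpa using hj)
  have : NeZero m := ⟨hm.ne'⟩
  obtain ⟨ζ, hζ⟩ : ∃ ζ : ℂ, IsPrimitiveRoot ζ m := ⟨_, Complex.isPrimitiveRoot_exp m hm.ne'⟩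
  have hexp : ∀ i, ∃ a : ℕ, t i ≠ 0 → ζ ^ a = t i := fun i =>
    (ht i).elim (fun h0 => ⟨0, fun h => (h h0).elim⟩)
      fun h1 => (hζ.eq_pow_of_pow_eq_one h1).imp fun _ ha _ => ha.2
  choose a ha using hexp
  let s := Finset.univ.filter (t · ≠ 0)
  let P : ℚ[X] := 1 + ∑ i ∈ s, X ^ a i
  have haeval : ∀ w : ℂ, aeval w P = 1 + ∑ i ∈ s, w ^ a i := by simp [P]
  have hsum_s : ∀ k : ℤ, k ≠ 0 → ∑ i, t i ^ k = ∑ i ∈ s, (ζ ^ k) ^ a i := fun k hk => by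
    rw [Finset.sum_filter]
    refine Finset.sum_congr rfl fun i _ => ?_
    split_ifs with h
    · rw [← ha i h, ← zpow_natCast, ← zpow_natCast, ← zpow_mul, ← zpow_mul, mul_comm]
    · rw [not_not.mp h, zero_zpow k hk]
  have hroot : aeval ζ P = 0 := by
    have h1 := hsum_s 1 one_ne_zero
    simp only [zpow_one] at h1
    rw [haeval, ← h1, hsum]
    ring
  have hroot_j := hζ.aeval_zpow_eq_zero hm hj hroot
  rw [haeval, ← hsum_s j hj0] at hroot_j
  linear_combination hroot_j

end RootsOfUnitySum

/-- Cohn's condition (with nonzero values `m`-th roots of unity) is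
invariant under the Galois action `f ↦ f^j` for `gcd(j, m) = 1`. -/
theorem cohn_galois_invariance (p : ℕ) [Fact p.Prime] (m : ℕ) (hm : 0 < m)
    (f : ZMod p → ℂ) (hf0 : f 0 = 0)
    (hfm : ∀ x : ZMod p, x ≠ 0 → f x ^ m = 1)
    (hcohn : ∀ h : ZMod p, h ≠ 0 →
      ∑ x : ZMod p, f x * (starRingEnd ℂ) (f (x + h)) = -1)
    (j : ℤ) (hj : Int.gcd j m = 1) :
    (f 0) ^ j = 0 ∧
    (∀ x : ZMod p, x ≠ 0 → ((f x) ^ j) ^ m = 1) ∧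
    ∀ h : ZMod p, h ≠ 0 →
      ∑ x : ZMod p, (f x) ^ j * (starRingEnd ℂ) ((f (x + h)) ^ j) = -1 := by
  have hval : ∀ x, f x = 0 ∨ f x ^ m = 1 := fun x =>
    (eq_or_ne x 0).imp (fun hx : x = 0 => hx ▸ hf0) (hfm x)
  have hterm : ∀ h x, f x * starRingEnd ℂ (f (x + h)) = 0 ∨
      (f x * starRingEnd ℂ (f (x + h))) ^ m = 1 := fun h x =>
    mul_conj_eq_zero_or_pow_eq_one (hval x) (hval (x + h))
  have hj0 : j ≠ 0 := by
    rintro rfl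
    exact ne_one_of_sum_eq_neg_one (hterm 1) (hcohn 1 one_ne_zero) (by simpa using hj)
  refine ⟨by rw [hf0, zero_zpow j hj0], fun x hx => ?_, fun h hh => ?_⟩
  · rw [← zpow_natCast, ← zpow_mul, mul_comm, zpow_mul, zpow_natCast, hfm x hx, one_zpow]
  · simp only [map_zpow₀, ← mul_zpow]
    exact sum_zpow_eq_neg_one_of_gcd_eq_one hm (hterm h) (hcohn h hh) hj
end

section
/- Let p be an odd prime and n a positive integer with gcd(n, p) = 1. Suppose f : ZMod p → ℂ satisfies f(0) = 0, f(x)^n = 1 for all x ≠ 0, and ∑_{x ∈ ZMod p} f(x) = 0. Let t be a unit of ZMod p and let a, b be integers such that ∑_{x ≠ 0} f(x)·e^{2πi x / p} = e^{-2πi a / p} · e^{-2πi b / n} · ∑_{x ≠ 0} f(t⁻¹·x)·e^{2πi x / p}. Then a ≡ 0 (mod p). -/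
/-!
Write `ψ` for the standard additive character of `ZMod p` and `ω = exp (2πi/n)`. Shifting the
summation variable by `a` turns the hypothesis into `∑ x, g x * ψ x = 0` with
`g x = f x - ω⁻ᵇ f (t⁻¹ (x + a))`, a function with values in `ℚ(ω)`. Since `gcd(n, p) = 1`, the
field `ℚ(ω, ζ_p)` contains the primitive `np`-th root `ωζ_p`, so `ζ_p` has degree `p - 1` over
`ℚ(ω)`; hence the only `ℚ(ω)`-linear relation among the values of `ψ` is `∑ x, ψ x = 0`, and `g`
is constant. As `∑ x, g x = 0`, in fact `g = 0`, and at `x = -a` this reads `f (-a) = ω⁻ᵇ f 0 = 0`,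
which is impossible when `a ≢ 0` because then `f (-a) ^ n = 1`.
-/

open Finset Polynomial IntermediateField

theorem IsPrimitiveRoot.finrank_adjoin_rat {L : Type*} [Field L] [CharZero L] {n : ℕ} [NeZero n]
    {ζ : L} (hζ : IsPrimitiveRoot ζ n) : Module.finrank ℚ ℚ⟮ζ⟯ = n.totient := by
  rw [adjoin.finrank (hζ.isIntegral (NeZero.pos n)).tower_top,
    ← cyclotomic_eq_minpoly_rat hζ (NeZero.pos n), natDegree_cyclotomic]

theorem IsPrimitiveRoot.mem_adjoin_of_pow_eq_one {F L : Type*} [Field F] [Field L] [Algebra F L]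
    {n : ℕ} [NeZero n] {ω z : L} (hω : IsPrimitiveRoot ω n) (hz : z ^ n = 1) : z ∈ F⟮ω⟯ := by
  obtain ⟨i, -, rfl⟩ := hω.eq_pow_of_pow_eq_one hz
  exact pow_mem (mem_adjoin_simple_self F ω) i

theorem IsPrimitiveRoot.totient_le_natDegree_minpoly_adjoin {L : Type*} [Field L] [CharZero L]
    {m n : ℕ} [NeZero m] [NeZero n] {ω ζ : L} (hω : IsPrimitiveRoot ω n)
    (hζ : IsPrimitiveRoot ζ m) (hnm : n.Coprime m) :
    m.totient ≤ (minpoly ℚ⟮ω⟯ ζ).natDegree := by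
  set K := ℚ⟮ω⟯
  have hωζ : IsPrimitiveRoot (ω * ζ) (n * m) := by
    rw [IsPrimitiveRoot.iff_orderOf, (Commute.all ω ζ).orderOf_mul_eq_mul_orderOf_of_coprime
      (by rwa [← hω.eq_orderOf, ← hζ.eq_orderOf]), ← hω.eq_orderOf, ← hζ.eq_orderOf]
  have hωint : IsIntegral ℚ ω := (hω.isIntegral (NeZero.pos n)).tower_top
  have hζint : IsIntegral K ζ := (hζ.isIntegral (NeZero.pos m)).tower_top
  have : FiniteDimensional ℚ K := adjoin.finiteDimensional hωint
  have : FiniteDimensional K K⟮ζ⟯ := adjoin.finiteDimensional hζint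
  have : FiniteDimensional ℚ K⟮ζ⟯ := Module.Finite.trans K K⟮ζ⟯
  have : FiniteDimensional ℚ (K⟮ζ⟯.restrictScalars ℚ) :=
    (inferInstance : FiniteDimensional ℚ K⟮ζ⟯)
  have hle : ℚ⟮ω * ζ⟯ ≤ K⟮ζ⟯.restrictScalars ℚ := by
    rw [adjoin_simple_le_iff]
    exact mul_mem (K⟮ζ⟯.algebraMap_mem ⟨ω, mem_adjoin_simple_self ℚ ω⟩)
      (mem_adjoin_simple_self K ζ)
  have htower : n.totient * m.totient ≤ n.totient * (minpoly K ζ).natDegree := by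
    calc n.totient * m.totient = Module.finrank ℚ ℚ⟮ω * ζ⟯ := by
          rw [hωζ.finrank_adjoin_rat, Nat.totient_mul hnm]
      _ ≤ Module.finrank ℚ (K⟮ζ⟯.restrictScalars ℚ) := finrank_le_of_le_right hle
      _ = Module.finrank ℚ K * Module.finrank K K⟮ζ⟯ :=
          (Module.finrank_mul_finrank ℚ K K⟮ζ⟯).symm
      _ = n.totient * (minpoly K ζ).natDegree := by
          rw [hω.finrank_adjoin_rat, adjoin.finrank hζint]
  exact Nat.le_of_mul_le_mul_left htower (Nat.totient_pos.mpr (NeZero.pos n))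

theorem ZMod.val_lt_sub_one_of_ne_neg_one {p : ℕ} [NeZero p] {x : ZMod p} (hx : x ≠ -1) :
    x.val < p - 1 := by
  obtain ⟨k, rfl⟩ : ∃ k, p = k + 1 := Nat.exists_eq_succ_of_ne_zero (NeZero.ne p)
  have : x.val ≠ k := fun h => hx (ZMod.val_injective _ (h.trans (ZMod.val_neg_one k).symm))
  have := x.val_lt
  omega

theorem AddChar.zmod_apply_eq_pow_val {p : ℕ} [NeZero p] {M : Type*} [Monoid M]
    (ψ : AddChar (ZMod p) M) (x : ZMod p) : ψ x = ψ 1 ^ x.val := by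
  rw [← ψ.map_nsmul_eq_pow, nsmul_one, ZMod.natCast_zmod_val]

theorem AddChar.eq_of_sum_smul_eq_zero {K L : Type*} [Field K] [Field L] [Algebra K L] {p : ℕ}
    [NeZero p] {ψ : AddChar (ZMod p) L} (hψ : ψ ≠ 1)
    (hdeg : p - 1 ≤ (minpoly K (ψ 1)).natDegree) {c : ZMod p → K} (h : ∑ x, c x • ψ x = 0)
    (x y : ZMod p) : c x = c y := by
  suffices ∀ x, c x = c (-1) by rw [this x, this y]
  have hind : LinearIndependent K (fun x : {x : ZMod p // x ≠ -1} => ψ x) := by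
    have hval (x : {x : ZMod p // x ≠ -1}) : x.1.val < (minpoly K (ψ 1)).natDegree :=
      (ZMod.val_lt_sub_one_of_ne_neg_one x.2).trans_le hdeg
    convert (linearIndependent_pow (ψ 1)).comp (fun x => ⟨x.1.val, hval x⟩)
      fun x y hxy => Subtype.ext (ZMod.val_injective _ (Fin.mk.inj_iff.mp hxy)) with x
    exact ψ.zmod_apply_eq_pow_val x
  -- subtracting `c (-1) • ∑ x, ψ x = 0` removes the top power `ψ 1 ^ (p - 1)`
  have hsum : ∑ x, (c x - c (-1)) • ψ x = 0 := by
    simp only [sub_smul, sum_sub_distrib, h, ← smul_sum, sum_eq_zero_of_ne_one hψ, smul_zero,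
      sub_zero]
  rw [Fintype.sum_eq_add_sum_subtype_ne _ (-1), sub_self, zero_smul, zero_add] at hsum
  intro x
  by_cases hx : x = -1
  · rw [hx]
  · exact sub_eq_zero.mp (Fintype.linearIndependent_iff.mp hind _ hsum ⟨x, hx⟩)

theorem AddChar.sum_sub_mul_shift_eq_zero {G R : Type*} [AddCommGroup G] [Fintype G] [CommRing R]
    (ψ : AddChar G R) {f g : G → R} (a : G) (w : R)
    (h : ∑ x, f x * ψ x = ψ (-a) * w * ∑ x, g x * ψ x) :
    ∑ x, (f x - w * g (x + a)) * ψ x = 0 := by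
  have hshift : ψ (-a) * ∑ x, g x * ψ x = ∑ x, g (x + a) * ψ x := by
    rw [mul_sum, ← Equiv.sum_comp (Equiv.addRight a)]
    refine sum_congr rfl fun x _ => ?_
    rw [Equiv.coe_addRight, ψ.map_add_eq_mul]
    have hinv : ψ (-a) * ψ a = 1 := by rw [← ψ.map_add_eq_mul, neg_add_cancel, ψ.map_zero_eq_one]
    linear_combination g (x + a) * ψ x * hinv
  simp only [sub_mul, sum_sub_distrib, mul_assoc, ← mul_sum]
  rw [← hshift, h]
  ring

theorem AddChar.eq_zero_of_sum_smul_eq_zero {K L : Type*} [Field K] [CharZero K] [Field L]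
    [Algebra K L] {p : ℕ} [NeZero p] {ψ : AddChar (ZMod p) L} (hψ : ψ ≠ 1)
    (hdeg : p - 1 ≤ (minpoly K (ψ 1)).natDegree) {c : ZMod p → K} (h : ∑ x, c x • ψ x = 0)
    (hc : ∑ x, c x = 0) (x : ZMod p) : c x = 0 := by
  have hconst := AddChar.eq_of_sum_smul_eq_zero hψ hdeg h
  simpa only [hconst _ x, sum_const, card_univ, ZMod.card, nsmul_eq_mul, mul_eq_zero,
    Nat.cast_eq_zero, NeZero.ne p, false_or] using hc

theorem ZMod.eq_zero_of_sum_mul_stdAddChar_eq_zero {p n : ℕ} [Fact p.Prime] [NeZero n] {ω : ℂ}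
    (hω : IsPrimitiveRoot ω n) (hnp : n.Coprime p) {g : ZMod p → ℂ} (hgω : ∀ x, g x ∈ ℚ⟮ω⟯)
    (h : ∑ x, g x * stdAddChar x = 0) (hsum : ∑ x, g x = 0) (x : ZMod p) : g x = 0 := by
  have hp : p.Prime := Fact.out
  have hψ : IsPrimitiveRoot (stdAddChar (1 : ZMod p)) p := by
    rw [← Int.cast_one, stdAddChar_coe]
    simpa using Complex.isPrimitiveRoot_exp p hp.ne_zero
  have hdeg : p - 1 ≤ (minpoly ℚ⟮ω⟯ (stdAddChar (1 : ZMod p))).natDegree :=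
    Nat.totient_prime hp ▸ hω.totient_le_natDegree_minpoly_adjoin hψ hnp
  let c : ZMod p → ℚ⟮ω⟯ := fun x => ⟨g x, hgω x⟩
  refine congrArg Subtype.val (stdAddChar.eq_zero_of_sum_smul_eq_zero (c := c)
    (AddChar.ne_one_iff.mpr ⟨1, hψ.ne_one hp.one_lt⟩) hdeg ?_ ?_ x)
  · simpa [c, Algebra.smul_def] using h
  · exact Subtype.ext (by simpa [c, IntermediateField.coe_sum] using hsum)

theorem ZMod.sum_filter_ne_zero_mul_exp {p : ℕ} [NeZero p] {f : ZMod p → ℂ} (hf0 : f 0 = 0) :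
    ∑ x ∈ univ.filter (fun x : ZMod p => x ≠ 0),
        f x * Complex.exp (2 * Real.pi * Complex.I * x.val / p) = ∑ x, f x * stdAddChar x := by
  simp only [stdAddChar_apply, toCircle_apply, filter_ne']
  exact sum_erase _ (by rw [hf0, zero_mul])

theorem ZMod.exp_neg_intCast_eq_stdAddChar {p : ℕ} [NeZero p] (a : ℤ) :
    Complex.exp (-(2 * Real.pi * Complex.I * a / p)) = stdAddChar (-a : ZMod p) := by
  rw [← Int.cast_neg, stdAddChar_coe]
  push_cast
  ring_nf

theorem exponent_a_vanishes_general (p : ℕ) [Fact p.Prime]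
    (n : ℕ) (hn : 0 < n) (hnp : Nat.gcd n p = 1)
    (f : ZMod p → ℂ) (hf0 : f 0 = 0)
    (hfn : ∀ x : ZMod p, x ≠ 0 → f x ^ n = 1)
    (hsum : ∑ x : ZMod p, f x = 0)
    (t : (ZMod p)ˣ) (a b : ℤ)
    (heq : ∑ x ∈ univ.filter (fun x : ZMod p => x ≠ 0),
        f x * Complex.exp (2 * Real.pi * Complex.I * x.val / p)
      = Complex.exp (-(2 * Real.pi * Complex.I * a / p)) *
          Complex.exp (-(2 * Real.pi * Complex.I * b / n)) *
          ∑ x ∈ univ.filter (fun x : ZMod p => x ≠ 0),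
            f (((t⁻¹ : (ZMod p)ˣ) : ZMod p) * x) *
              Complex.exp (2 * Real.pi * Complex.I * x.val / p)) :
    (p : ℤ) ∣ a := by
  have : NeZero n := ⟨hn.ne'⟩
  set ω := Complex.exp (2 * Real.pi * Complex.I / n)
  have hω : IsPrimitiveRoot ω n := Complex.isPrimitiveRoot_exp n hn.ne'
  have hexpb : Complex.exp (-(2 * Real.pi * Complex.I * b / n)) = ω ^ (-b) := by
    rw [← Complex.exp_int_mul]
    push_cast
    ring_nf
  rw [ZMod.sum_filter_ne_zero_mul_exp hf0, ZMod.sum_filter_ne_zero_mul_exp (by rw [mul_zero, hf0]),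
    ZMod.exp_neg_intCast_eq_stdAddChar, hexpb] at heq
  have hfω (x : ZMod p) : f x ∈ ℚ⟮ω⟯ := by
    by_cases hx : x = 0
    · rw [hx, hf0]
      exact zero_mem _
    · exact hω.mem_adjoin_of_pow_eq_one (hfn x hx)
  have hshift : ∑ x, f ((t⁻¹ : (ZMod p)ˣ) * (x + a)) = ∑ x, f x :=
    Equiv.sum_comp ((Equiv.addRight (a : ZMod p)).trans (Units.mulLeft t⁻¹)) f
  have hg0 := ZMod.eq_zero_of_sum_mul_stdAddChar_eq_zero hω hnp
    (g := fun x => f x - ω ^ (-b) * f ((t⁻¹ : (ZMod p)ˣ) * (x + a)))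
    (fun x => sub_mem (hfω x) (mul_mem (zpow_mem (mem_adjoin_simple_self ℚ ω) (-b)) (hfω _)))
    (ZMod.stdAddChar.sum_sub_mul_shift_eq_zero (g := fun x => f ((t⁻¹ : (ZMod p)ˣ) * x)) _ _
      heq)
    (by rw [sum_sub_distrib, ← mul_sum, hshift, hsum, mul_zero, sub_zero])
  by_contra ha
  have hfa : f (-a) = 0 := by
    have := hg0 (-a)
    rwa [neg_add_cancel, mul_zero, hf0, mul_zero, sub_zero] at this
  have hane : (-a : ZMod p) ≠ 0 := by rwa [neg_ne_zero, Ne, ZMod.intCast_zmod_eq_zero_iff_dvd]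
  simpa [hfa, hn.ne'] using hfn _ hane

/-- if the nonzero values of `f` are `n`-th roots of unity with
`gcd(n, p) = 1`, `∑ x, f x = 0`, `t` is a unit of `ZMod p`, and
`∑_{x ≠ 0} f x ζ_p^x = ζ_p^{-a} ζ_n^{-b} ∑_{x ≠ 0} f (t⁻¹ x) ζ_p^x`,
then `a ≡ 0 (mod p)`. -/
theorem exponent_a_vanishes (p : ℕ) [Fact p.Prime] (hp2 : p ≠ 2)
    (n : ℕ) (hn : 0 < n) (hnp : Nat.gcd n p = 1)
    (f : ZMod p → ℂ) (hf0 : f 0 = 0)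
    (hfn : ∀ x : ZMod p, x ≠ 0 → f x ^ n = 1)
    (hsum : ∑ x : ZMod p, f x = 0)
    (t : (ZMod p)ˣ) (a b : ℤ)
    (heq : ∑ x ∈ univ.filter (fun x : ZMod p => x ≠ 0),
        f x * Complex.exp (2 * Real.pi * Complex.I * x.val / p)
      = Complex.exp (-(2 * Real.pi * Complex.I * a / p)) *
          Complex.exp (-(2 * Real.pi * Complex.I * b / n)) *
          ∑ x ∈ univ.filter (fun x : ZMod p => x ≠ 0),
            f (((t⁻¹ : (ZMod p)ˣ) : ZMod p) * x) *
              Complex.exp (2 * Real.pi * Complex.I * x.val / p)) :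
    (p : ℤ) ∣ a :=
  exponent_a_vanishes_general p n hn hnp f hf0 hfn hsum t a b heq
end

section
/- Let p be a prime, k ≥ 1 an integer, and n a positive integer with gcd(n, p) = 1. Let ζ_n = e^{2πi/n}, ζ_p = e^{2πi/p}, ζ_{p^k} = e^{2πi/p^k} ∈ ℂ, and let K = ℚ(ζ_n) ⊆ ℂ. Suppose a_0, a_1, …, a_{p^k - 1} ∈ K and ∑_{i=0}^{p^k - 1} a_i·ζ_{p^k}^i lies in the subfield K(ζ_p) = ℚ(ζ_n, ζ_p) of ℂ. Then ∑_{i=0}^{p^k - 1} a_i·ζ_{p^k}^i = ∑_{j=0}^{p-1} a_{p^{k-1}·j}·ζ_p^j. -/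
/-! Write `d = p^(k-1)` and `i = d j + r` with `r < d`, `j < p`. Since `ζ_{p^k}^d = ζ_p`, the sum
is `∑_{r<d} g_r ζ_{p^k}^r` with `g_r = ∑_j a_{dj+r} ζ_p^j` in `F = ℚ(ζ_n, ζ_p)`. The degree of
`ζ_{p^k}` over `F` is at least `d`: `[F : ℚ] ≤ φ(np)` because `F ⊆ ℚ(ζ_{np})`, while
`F(ζ_{p^k})` contains primitive roots of unity of orders `n` and `p^k`, so
`[F(ζ_{p^k}) : ℚ] ≥ φ(np^k) = φ(np) d`. Hence `1, ζ_{p^k}, …, ζ_{p^k}^{d-1}` are linearly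
independent over `F`, and a sum lying in `F` equals its constant coefficient `g_0`. -/

open Complex Polynomial IntermediateField Module Finset Real

theorem Finset.sum_range_mul_eq_sum_sum {M : Type*} [AddCommMonoid M] (f : ℕ → M) (d p : ℕ) :
    ∑ i ∈ range (d * p), f i = ∑ r ∈ range d, ∑ j ∈ range p, f (d * j + r) := by
  induction p with
  | zero => simp
  | succ p ih =>
    simp [mul_add_one, Finset.sum_range_add, ih, Finset.sum_range_succ, Finset.sum_add_distrib]

theorem Complex.exp_two_pi_I_div_mul_pow (m l : ℕ) (hl : l ≠ 0) :
    exp (2 * π * I / ((m * l : ℕ) : ℂ)) ^ l = exp (2 * π * I / m) := by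
  rw [← exp_nat_mul]
  congr 1
  rcases eq_or_ne m 0 with rfl | hm
  · simp
  push_cast
  field_simp

theorem IsPrimitiveRoot.finrank_adjoin_rat_s9 {L : Type*} [Field L] [CharZero L] {ω : L} {m : ℕ}
    (hω : IsPrimitiveRoot ω m) (hm : 0 < m) : finrank ℚ ℚ⟮ω⟯ = m.totient := by
  rw [adjoin.finrank (hω.isIntegral hm).tower_top, ← cyclotomic_eq_minpoly_rat hω hm,
    natDegree_cyclotomic]

theorem IsPrimitiveRoot.totient_lcm_le_finrank_mul_natDegree_minpoly {L : Type*} [Field L]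
    [CharZero L] {F : IntermediateField ℚ L} [FiniteDimensional ℚ F] {x y : L} {m n : ℕ}
    (hx : IsPrimitiveRoot x m) (hy : IsPrimitiveRoot y n) (hxF : x ∈ F) (hm : 0 < m) (hn : 0 < n) :
    (m.lcm n).totient ≤ finrank ℚ F * (minpoly F y).natDegree := by
  have hyF : IsIntegral F y := (hy.isIntegral hn).tower_top
  have := adjoin.finiteDimensional hyF
  have : FiniteDimensional ℚ F⟮y⟯ := Module.Finite.trans F F⟮y⟯
  have : Module.Free F F⟮y⟯ := Module.Free.of_divisionRing F F⟮y⟯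
  rw [← adjoin.finrank hyF, Module.finrank_mul_finrank ℚ F F⟮y⟯]
  have hx' : IsPrimitiveRoot (⟨x, F⟮y⟯.algebraMap_mem ⟨x, hxF⟩⟩ : F⟮y⟯) m :=
    IsPrimitiveRoot.coe_submonoidClass_iff.mp hx
  have hy' : IsPrimitiveRoot (AdjoinSimple.gen F y) n :=
    IsPrimitiveRoot.coe_submonoidClass_iff.mp hy
  exact hx'.lcm_totient_le_finrank hy' (cyclotomic.irreducible_rat (Nat.lcm_pos hm hn))

theorem IntermediateField.eq_zero_of_sum_range_mul_pow_eq_zero {K L : Type*} [Field K] [Field L]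
    [Algebra K L] {F : IntermediateField K L} {x : L} {d : ℕ}
    (hd : d ≤ (minpoly F x).natDegree) {c : ℕ → L} (hc : ∀ r < d, c r ∈ F)
    (hsum : ∑ r ∈ range d, c r * x ^ r = 0) : ∀ r < d, c r = 0 := by
  have hind := (linearIndependent_pow (K := F) x).comp (Fin.castLE hd) (Fin.castLE_injective hd)
  have hsum' : ∑ i : Fin d, (⟨c i, hc i i.2⟩ : F) • x ^ (i : ℕ) = 0 := by
    simpa [Algebra.smul_def, ← Fin.sum_univ_eq_sum_range (fun r => c r * x ^ r) d] using hsum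
  intro r hr
  simpa using congrArg Subtype.val (Fintype.linearIndependent_iff.mp hind _ hsum' ⟨r, hr⟩)

theorem IntermediateField.sum_range_mul_pow_eq_of_mem {K L : Type*} [Field K] [Field L]
    [Algebra K L] {F : IntermediateField K L} {x : L} {d : ℕ} (hd0 : 0 < d)
    (hd : d ≤ (minpoly F x).natDegree) {g : ℕ → L} (hg : ∀ r < d, g r ∈ F)
    (hmem : ∑ r ∈ range d, g r * x ^ r ∈ F) : ∑ r ∈ range d, g r * x ^ r = g 0 := by
  set S := ∑ r ∈ range d, g r * x ^ r
  have h0 := eq_zero_of_sum_range_mul_pow_eq_zero hd (c := fun r => g r - if r = 0 then S else 0)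
    (fun r hr => sub_mem (hg r hr) (by split_ifs; exacts [hmem, zero_mem F]))
    (by simp [sub_mul, Finset.sum_sub_distrib, hd0, S]) 0 hd0
  rw [eq_comm, ← sub_eq_zero]
  simpa using h0

theorem prime_pow_pred_le_natDegree_minpoly_exp (p : ℕ) [Fact p.Prime] {k : ℕ} (hk : 1 ≤ k)
    {n : ℕ} (hn : 0 < n) (hnp : n.Coprime p) :
    p ^ (k - 1) ≤ (minpoly ℚ⟮exp (2 * π * I / n), exp (2 * π * I / p)⟯
      (exp (2 * π * I / (p ^ k : ℕ)))).natDegree := by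
  set F := ℚ⟮exp (2 * π * I / n), exp (2 * π * I / p)⟯
  have hp : p.Prime := Fact.out
  have hnp0 : 0 < n * p := Nat.mul_pos hn hp.pos
  have hζn := isPrimitiveRoot_exp n hn.ne'
  have hω := isPrimitiveRoot_exp (n * p) hnp0.ne'
  have hFω : F ≤ ℚ⟮exp (2 * π * I / (n * p : ℕ))⟯ := by
    rw [adjoin_le_iff]
    rintro x (rfl | rfl)
    · rw [← exp_two_pi_I_div_mul_pow n p hp.ne_zero]
      exact pow_mem (mem_adjoin_simple_self ℚ _) p
    · rw [← exp_two_pi_I_div_mul_pow p n hn.ne', mul_comm p n]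
      exact pow_mem (mem_adjoin_simple_self ℚ _) n
  have : FiniteDimensional ℚ F := finiteDimensional_adjoin_pair (hζn.isIntegral hn).tower_top
    ((isPrimitiveRoot_exp p hp.ne_zero).isIntegral hp.pos).tower_top
  have := adjoin.finiteDimensional (K := ℚ) (hω.isIntegral hnp0).tower_top
  have hF : finrank ℚ F ≤ n.totient * (p - 1) := by
    rw [← Nat.totient_prime hp, ← Nat.totient_mul hnp, ← hω.finrank_adjoin_rat_s9 hnp0]
    exact finrank_le_of_le_right hFω
  have hE := hζn.totient_lcm_le_finrank_mul_natDegree_minpoly (F := F)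
    (isPrimitiveRoot_exp (p ^ k) (pow_pos hp.pos k).ne') (subset_adjoin ℚ _ (Set.mem_insert _ _))
    hn (pow_pos hp.pos k)
  rw [(hnp.pow_right k).lcm_eq_mul, Nat.totient_mul (hnp.pow_right k),
    Nat.totient_prime_pow hp hk] at hE
  have hpos : 0 < n.totient * (p - 1) :=
    Nat.mul_pos (Nat.totient_pos.mpr hn) (Nat.sub_pos_of_lt hp.one_lt)
  refine le_of_mul_le_mul_left ?_ hpos
  calc n.totient * (p - 1) * p ^ (k - 1) = n.totient * (p ^ (k - 1) * (p - 1)) := by ring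
    _ ≤ finrank ℚ F * (minpoly F (exp (2 * π * I / (p ^ k : ℕ)))).natDegree := hE
    _ ≤ _ := Nat.mul_le_mul_right _ hF

/-- if `a_0, …, a_{p^k-1} ∈ ℚ(ζ_n)` and `∑ a_i ζ_{p^k}^i ∈ ℚ(ζ_n, ζ_p)`,
then `∑_{i<p^k} a_i ζ_{p^k}^i = ∑_{j<p} a_{p^{k-1} j} ζ_p^j`. -/
theorem sum_in_K_zeta_p (p : ℕ) [Fact p.Prime] (k : ℕ) (hk : 1 ≤ k)
    (n : ℕ) (hn : 0 < n) (hnp : Nat.gcd n p = 1)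
    (a : ℕ → ℂ)
    (ha : ∀ i, i < p ^ k →
      a i ∈ IntermediateField.adjoin ℚ
        ({Complex.exp (2 * Real.pi * Complex.I / n)} : Set ℂ))
    (hmem : (∑ i ∈ Finset.range (p ^ k),
        a i * Complex.exp (2 * Real.pi * Complex.I / (p ^ k : ℕ)) ^ i)
      ∈ IntermediateField.adjoin ℚ
        ({Complex.exp (2 * Real.pi * Complex.I / n),
          Complex.exp (2 * Real.pi * Complex.I / p)} : Set ℂ)) :
    ∑ i ∈ Finset.range (p ^ k),
        a i * Complex.exp (2 * Real.pi * Complex.I / (p ^ k : ℕ)) ^ i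
      = ∑ j ∈ Finset.range p,
          a (p ^ (k - 1) * j) * Complex.exp (2 * Real.pi * Complex.I / p) ^ j := by
  have hp : p.Prime := Fact.out
  have hdeg := prime_pow_pred_le_natDegree_minpoly_exp p hk hn hnp
  set ζp := exp (2 * π * I / p)
  set ζ := exp (2 * π * I / (p ^ k : ℕ))
  set d := p ^ (k - 1)
  have hpk : p ^ k = p * d := by rw [← pow_succ']; congr; omega
  have hζd : ζ ^ d = ζp := by
    simp only [ζ, hpk]
    exact exp_two_pi_I_div_mul_pow p d (pow_pos hp.pos _).ne'
  have hsplit : ∑ i ∈ range (p ^ k), a i * ζ ^ i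
      = ∑ r ∈ range d, (∑ j ∈ range p, a (d * j + r) * ζp ^ j) * ζ ^ r := by
    rw [hpk, mul_comm, Finset.sum_range_mul_eq_sum_sum]
    refine sum_congr rfl fun r _ => ?_
    rw [sum_mul]
    refine sum_congr rfl fun j _ => ?_
    rw [pow_add, pow_mul, hζd]
    ring
  rw [hsplit] at hmem ⊢
  rw [sum_range_mul_pow_eq_of_mem (pow_pos hp.pos _) hdeg _ hmem]
  · simp
  · intro r hr
    refine sum_mem fun j hj => mul_mem (adjoin.mono ℚ _ _ (by simp) (ha _ ?_))
      (pow_mem (subset_adjoin _ _ (by simp)) j)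
    rw [Finset.mem_range] at hj
    calc d * j + r < d * (j + 1) := by rw [mul_add_one]; exact Nat.add_lt_add_left hr _
      _ ≤ d * p := Nat.mul_le_mul_left _ hj
      _ = p ^ k := by rw [hpk, mul_comm]
end

section
/- (Biro) Let p be a prime, and let F be a field of characteristic p (so F contains a copy of ZMod p). Suppose a : ZMod p → F satisfies a(0) = 0, a(1) = 1, a(i) ≠ 0 for all i ≠ 0, and ∑_{i ∈ (ZMod p), i ≠ 0} a(i+j)/a(i) = -1 for every j ≠ 0. Then there exists an integer A with 1 ≤ A ≤ p - 2 such that a(i) = i^A for every i ∈ ZMod p, where i ∈ ZMod p is identified with its image in F under the canonical ring map ZMod p → F. -/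
/-!
Interpolate `a` and `a⁻¹` on the prime field by polynomials `P` and `Q` of degree `< p`. The
hypothesis says that the convolution `y ↦ ∑ₓ Q(x) P(x + y)` is the constant `-1`, so its Taylor
coefficients `∑ₓ Q(x) (Dᵐ P)(x)`, `m ≥ 1`, vanish (`Dᵐ` the Hasse derivative). Since
`∑ₓ R(x) = -[X^(p-1)] R` when `deg R ≤ p - 1`, the choice `m = deg P + deg Q - (p - 1)` would
produce a nonzero such sum unless `deg P + deg Q ≤ p - 1`. Then `P Q` and `X^(p-1)` agree on the
prime field, so `P Q = X^(p-1)` and `P` is a monomial.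
-/

open Finset Polynomial

theorem Polynomial.exists_eq_C_mul_X_pow_of_dvd_X_pow {F : Type*} [Field F] {P : F[X]} {n : ℕ}
    (h : P ∣ X ^ n) : ∃ (c : F) (A : ℕ), P = C c * X ^ A := by
  obtain ⟨A, -, hA⟩ := (dvd_prime_pow prime_X n).1 h
  obtain ⟨u, hu⟩ := hA.symm
  obtain ⟨c, -, hc⟩ := isUnit_iff.1 u.isUnit
  exact ⟨c, A, by rw [← hu, ← hc, mul_comm]⟩

theorem Polynomial.natDegree_ne_zero_of_eval_ne {R : Type*} [Semiring R] {f : R[X]} {x y : R}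
    (h : f.eval x ≠ f.eval y) : f.natDegree ≠ 0 := fun hf =>
  h (by rw [eq_C_of_natDegree_eq_zero hf, eval_C, eval_C])

namespace FiniteField

variable {K : Type*} [Field K] [Fintype K]

theorem sum_pow_card_sub_one : ∑ x : K, x ^ (Fintype.card K - 1) = -1 := by
  classical
  have hq : 1 ≤ Fintype.card K := Fintype.card_pos
  rw [← sum_erase_add _ _ (mem_univ 0), zero_pow (by have := Fintype.one_lt_card (α := K); omega),
    add_zero, sum_congr rfl fun x hx => pow_card_sub_one_eq_one x (ne_of_mem_erase hx),
    sum_const, card_erase_of_mem (mem_univ 0), card_univ, nsmul_one, Nat.cast_sub hq,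
    Nat.cast_card_eq_zero, Nat.cast_one, zero_sub]

theorem sum_eval_map_eq_neg_coeff {R : Type*} [CommRing R] (ι : K →+* R) {f : R[X]}
    (hf : f.natDegree ≤ Fintype.card K - 1) :
    ∑ x : K, f.eval (ι x) = -f.coeff (Fintype.card K - 1) := by
  obtain ⟨r, hr⟩ : ∃ r, Fintype.card K = r + 1 :=
    Nat.exists_eq_succ_of_ne_zero Fintype.card_ne_zero
  rw [hr, Nat.add_sub_cancel] at hf ⊢
  calc ∑ x : K, f.eval (ι x) = ∑ x : K, ∑ n ∈ range (r + 1), f.coeff n * ι x ^ n := by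
        simp only [eval_eq_sum_range' (Nat.lt_succ_of_le hf)]
    _ = ∑ n ∈ range (r + 1), f.coeff n * ι (∑ x : K, x ^ n) := by
        rw [sum_comm]
        simp only [map_sum, map_pow, mul_sum]
    _ = -f.coeff r := by
        rw [sum_range_succ, sum_eq_zero fun n hn => ?_]
        · rw [← Nat.add_sub_cancel r 1, ← hr, sum_pow_card_sub_one]
          simp
        · rw [sum_pow_lt_card_sub_one K n (by rw [hr]; simpa using hn), map_zero, mul_zero]

variable {F : Type*} [Field F] (ι : K →+* F)

theorem exists_natDegree_le_eval_eq (f : K → F) :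
    ∃ P : F[X], P.natDegree ≤ Fintype.card K - 1 ∧ ∀ x, P.eval (ι x) = f x := by
  classical
  refine ⟨Lagrange.interpolate univ ι f, natDegree_le_of_degree_le ?_,
    fun x => Lagrange.eval_interpolate_at_node f ι.injective.injOn (mem_univ x)⟩
  rw [← card_univ]
  exact Lagrange.degree_interpolate_le f ι.injective.injOn

theorem sum_mul_hasseDeriv_eval_eq_zero {P : F[X]} (hP : P.natDegree ≤ Fintype.card K - 1)
    (w : K → F) {c : F} (hconv : ∀ y, ∑ x, w x * P.eval (ι (x + y)) = c) {m : ℕ} (hm : m ≠ 0) :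
    ∑ x, w x * (hasseDeriv m P).eval (ι x) = 0 := by
  set T := ∑ x, C (w x) * taylor (ι x) P
  have hT : T = C c := by
    refine eq_of_natDegree_lt_card_of_eval_eq _ _ ι.injective (fun y => ?_) ?_
    · simp only [T, eval_finsetSum, eval_mul, eval_C, taylor_eval, ← map_add, add_comm y]
      exact hconv y
    · have := Fintype.card_pos (α := K)
      refine max_lt ((natDegree_sum_le_of_forall_le (n := Fintype.card K - 1) _ _
        fun x _ => ?_).trans_lt (by omega)) ?_
      · exact (natDegree_C_mul_le _ _).trans ((natDegree_taylor _ _).trans_le hP)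
      · rwa [natDegree_C]
  simpa [T, finsetSum_coeff, coeff_C_mul, taylor_coeff, coeff_C, hm] using
    congr_arg (coeff · m) hT

theorem mul_eq_X_pow_card_sub_one {P Q : F[X]}
    (hdeg : P.natDegree + Q.natDegree ≤ Fintype.card K - 1) (h0 : (P * Q).eval (ι 0) = 0)
    (hunit : ∀ x ≠ 0, (P * Q).eval (ι x) = 1) : P * Q = X ^ (Fintype.card K - 1) := by
  refine eq_of_natDegree_lt_card_of_eval_eq _ _ ι.injective (fun x => ?_) ?_
  · rcases eq_or_ne x 0 with rfl | hx
    · rw [h0, eval_pow, eval_X, map_zero,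
        zero_pow (by have := Fintype.one_lt_card (α := K); omega)]
    · rw [hunit x hx, eval_pow, eval_X, ← map_pow, pow_card_sub_one_eq_one x hx, map_one]
  · have := Fintype.card_pos (α := K)
    rw [natDegree_X_pow]
    exact max_lt (natDegree_mul_le.trans_lt (by omega)) (by omega)

end FiniteField

namespace ZMod

variable {p : ℕ} [Fact p.Prime] {F : Type*} [Field F]

theorem natDegree_add_natDegree_le_of_sum_eval_mul_eval_add_eq (ι : ZMod p →+* F) {P Q : F[X]}
    (hP : P.natDegree ≤ p - 1) (hQ : Q.natDegree ≤ p - 1) {c : F}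
    (hconv : ∀ y, ∑ x, Q.eval (ι x) * P.eval (ι (x + y)) = c) :
    P.natDegree + Q.natDegree ≤ p - 1 := by
  by_contra! hlt
  set m := P.natDegree + Q.natDegree - (p - 1)
  have hP0 : P ≠ 0 := by rintro rfl; rw [natDegree_zero] at hlt; omega
  have hQ0 : Q ≠ 0 := by rintro rfl; rw [natDegree_zero] at hlt; omega
  have hDm := natDegree_hasseDeriv_le P m
  have hdeg : (Q * hasseDeriv m P).natDegree ≤ p - 1 := natDegree_mul_le.trans (by omega)
  have hcoeff : (Q * hasseDeriv m P).coeff (p - 1) =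
      Q.leadingCoeff * ((P.natDegree.choose m : F) * P.leadingCoeff) := by
    rw [show p - 1 = Q.natDegree + (P.natDegree - m) by omega,
      coeff_mul_add_eq_of_natDegree_le le_rfl hDm, hasseDeriv_coeff, Nat.sub_add_cancel (by omega)]
    rfl
  have hchoose : (P.natDegree.choose m : F) ≠ 0 := by
    rw [← map_natCast ι, _root_.map_ne_zero, Ne, ZMod.natCast_eq_zero_iff]
    have hp : p.Prime := Fact.out
    exact hp.coprime_iff_not_dvd.1 (hp.coprime_choose_of_lt (by omega) (by omega))
  have hsum := FiniteField.sum_mul_hasseDeriv_eval_eq_zero ι (by rwa [ZMod.card]) _ hconv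
    (m := m) (by omega)
  simp only [← eval_mul] at hsum
  rw [FiniteField.sum_eval_map_eq_neg_coeff ι (by rwa [ZMod.card]), ZMod.card, hcoeff,
    neg_eq_zero] at hsum
  exact mul_ne_zero (leadingCoeff_ne_zero.2 hQ0) (mul_ne_zero hchoose (leadingCoeff_ne_zero.2 hP0))
    hsum

theorem sum_inv_mul_add_eq_neg_one [CharP F p] {a : ZMod p → F} (h0 : a 0 = 0)
    (hne : ∀ i, i ≠ 0 → a i ≠ 0)
    (hsum : ∀ j : ZMod p, j ≠ 0 →
      ∑ i ∈ univ.filter (fun i : ZMod p => i ≠ 0), a (i + j) / a i = -1) (j : ZMod p) :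
    ∑ i, (a i)⁻¹ * a (i + j) = -1 := by
  have hfilter : ∑ i, (a i)⁻¹ * a (i + j) = ∑ i ∈ univ.filter (· ≠ 0), a (i + j) / a i := by
    rw [sum_filter_of_ne]
    · simp_rw [div_eq_mul_inv, mul_comm]
    · rintro i - h rfl
      rw [h0, div_zero] at h
      exact h rfl
  rcases eq_or_ne j 0 with rfl | hj
  -- for `j = 0` the sum counts the `p - 1 = -1` nonzero residues
  · rw [hfilter, sum_congr rfl fun i hi => by rw [add_zero, div_self (hne i (mem_filter.1 hi).2)],
      sum_const, filter_ne', card_erase_of_mem (mem_univ 0), card_univ, ZMod.card, nsmul_one,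
      Nat.cast_sub (Fact.out : p.Prime).one_le, CharP.cast_eq_zero, Nat.cast_one, zero_sub]
  · rw [hfilter, hsum j hj]

end ZMod

/-- Biro: if `F` is a field of characteristic `p`, `a : ZMod p → F`
satisfies `a 0 = 0`, `a 1 = 1`, `a i ≠ 0` for `i ≠ 0`, and
`∑_{i ≠ 0} a (i + j) / a i = -1` for every `j ≠ 0`, then `a i = i ^ A` for some
`1 ≤ A ≤ p - 2`, where `i` is viewed in `F` via the canonical map `ZMod p → F`. -/
theorem biro_char_p (p : ℕ) [Fact p.Prime] (F : Type*) [Field F] [CharP F p]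
    (a : ZMod p → F) (h0 : a 0 = 0) (h1 : a 1 = 1)
    (hne : ∀ i : ZMod p, i ≠ 0 → a i ≠ 0)
    (hsum : ∀ j : ZMod p, j ≠ 0 →
      ∑ i ∈ univ.filter (fun i : ZMod p => i ≠ 0), a (i + j) / a i = -1) :
    ∃ A : ℕ, 1 ≤ A ∧ A ≤ p - 2 ∧
      ∀ i : ZMod p, a i = (ZMod.castHom (dvd_refl p) F i) ^ A := by
  set ι := ZMod.castHom (dvd_refl p) F
  obtain ⟨P, hPdeg, hPa⟩ := FiniteField.exists_natDegree_le_eval_eq ι a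
  obtain ⟨Q, hQdeg, hQb⟩ := FiniteField.exists_natDegree_le_eval_eq ι fun i => (a i)⁻¹
  rw [ZMod.card] at hPdeg hQdeg
  have hdeg : P.natDegree + Q.natDegree ≤ p - 1 :=
    ZMod.natDegree_add_natDegree_le_of_sum_eval_mul_eval_add_eq ι hPdeg hQdeg fun j => by
      simp only [hPa, hQb]
      exact ZMod.sum_inv_mul_add_eq_neg_one h0 hne hsum j
  have hPQ : P * Q = X ^ (p - 1) := by
    rw [← ZMod.card p]
    refine FiniteField.mul_eq_X_pow_card_sub_one ι (by rwa [ZMod.card]) ?_ fun x hx => ?_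
    · rw [eval_mul, hPa, h0, zero_mul]
    · rw [eval_mul, hPa, hQb, mul_inv_cancel₀ (hne x hx)]
  obtain ⟨c, A, rfl⟩ := exists_eq_C_mul_X_pow_of_dvd_X_pow (Dvd.intro Q hPQ)
  obtain rfl : c = 1 := by simpa [h1] using hPa 1
  have hQ : Q.natDegree ≠ 0 :=
    natDegree_ne_zero_of_eval_ne (x := ι 0) (y := ι 1) (by
      rw [hQb, hQb, h0, h1, inv_zero, inv_one]
      exact zero_ne_one)
  rw [map_one, one_mul, natDegree_X_pow] at hdeg
  refine ⟨A, Nat.one_le_iff_ne_zero.2 ?_, by omega, fun i => by simp [← hPa]⟩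
  rintro rfl
  simpa [h0] using hPa 0
end

section
/- Let p be a prime, m a positive integer, and f : ZMod p → ℂ with f(0) = 0, f(x)^m = 1 for all x ≠ 0, and ∑_{x ∈ ZMod p} f(x)·conj(f(x+h)) = -1 for every h ≠ 0. Then for every integer j with gcd(j, m) = 1 and every integer t with t ≢ 0 (mod p), |∑_{x ∈ ZMod p} f(x)^j · e^{2πi t x / p}| = √p. In particular, every ℚ-conjugate of the Gauss sum G(f, ψ) = ∑_{x} f(x)·e^{2πi x / p} has absolute value √p, so the ℚ-norm of G(f, ψ) is, up to sign, a power of p. -/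
/-!
Since `ζ` and `ζ ^ j` (for `gcd(j, m) = 1`) have the same minimal polynomial over `ℚ`, namely the
`m`-th cyclotomic polynomial, raising `m`-th roots of unity to the `j`-th power preserves every
`ℚ`-valued sum of them; hence `f ^ j` again satisfies Cohn's condition
`∑ x, g x * conj (g (x + h)) = -1`. For such a `g` and a nontrivial additive character `ψ`,
`|∑ g ψ|² = ∑ h, ψ (-h) ∑ x, g x * conj (g (x + h)) = (p - 1) - ∑ h ≠ 0, ψ (-h) = p`.
The exponent `j = 0`, possible only for `m = 1`, cannot occur: a `0/1`-valued `f` has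
nonnegative autocorrelation.
-/

open Finset Complex Polynomial ComplexConjugate

theorem IsPrimitiveRoot.aeval_eq_zero_of_aeval_eq_zero {K : Type*} [Field K] [CharZero K]
    {m : ℕ} (hm : 0 < m) {ζ ζ' : K} (hζ : IsPrimitiveRoot ζ m) (hζ' : IsPrimitiveRoot ζ' m)
    {P : ℚ[X]} (hP : aeval ζ P = 0) : aeval ζ' P = 0 := by
  rwa [← minpoly.dvd_iff, ← cyclotomic_eq_minpoly_rat hζ' hm, cyclotomic_eq_minpoly_rat hζ hm,
    minpoly.dvd_iff]

theorem sum_zpow_eq_ratCast_of_sum_eq {ι : Type*} (s : Finset ι) {m : ℕ} (hm : 0 < m)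
    {u : ι → ℂ} (hu : ∀ i ∈ s, u i ^ m = 1) {q : ℚ} (hq : ∑ i ∈ s, u i = q)
    {j : ℤ} (hj : j.gcd m = 1) : ∑ i ∈ s, u i ^ j = q := by
  have : NeZero m := ⟨hm.ne'⟩
  obtain ⟨ζ, hζ⟩ : ∃ ζ : ℂ, IsPrimitiveRoot ζ m := ⟨_, Complex.isPrimitiveRoot_exp m hm.ne'⟩
  have hlog : ∀ i, ∃ k : ℕ, i ∈ s → ζ ^ k = u i := fun i => by
    by_cases hi : i ∈ s
    · obtain ⟨k, -, hk⟩ := hζ.eq_pow_of_pow_eq_one (hu i hi)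
      exact ⟨k, fun _ => hk⟩
    · exact ⟨0, fun h => absurd h hi⟩
  choose d hd using hlog
  have hζj := hζ.zpow_of_gcd_eq_one j hj
  have hP : aeval ζ (∑ i ∈ s, X ^ d i - C q) = 0 := by
    simp [sum_congr rfl hd, hq]
  have hP' := hζ.aeval_eq_zero_of_aeval_eq_zero hm hζj hP
  have hpow : ∀ i ∈ s, (ζ ^ j) ^ d i = u i ^ j := fun i hi => by
    rw [← hd i hi, ← zpow_natCast, ← zpow_natCast, ← zpow_mul, ← zpow_mul, mul_comm]
  simpa [sub_eq_zero, sum_congr rfl hpow] using hP'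

section Autocorrelation

variable {A : Type*} [Fintype A]

theorem sum_mul_addChar_mul_conj [AddCommGroup A] (ψ : AddChar A ℂ) (g : A → ℂ) :
    (∑ x, g x * ψ x) * conj (∑ x, g x * ψ x) =
      ∑ h, (∑ x, g x * conj (g (x + h))) * ψ (-h) := by
  calc (∑ x, g x * ψ x) * conj (∑ x, g x * ψ x)
      = ∑ x, ∑ h, g x * ψ x * conj (g (x + h) * ψ (x + h)) := by
        rw [map_sum, sum_mul_sum]
        exact sum_congr rfl fun x _ =>
          (Fintype.sum_equiv (Equiv.addLeft x) _ _ fun _ => rfl).symm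
    _ = ∑ x, ∑ h, g x * conj (g (x + h)) * ψ (-h) := by
        refine sum_congr rfl fun x _ => sum_congr rfl fun h _ => ?_
        have hψ : ψ x * ψ (-x) = 1 := by
          rw [← AddChar.map_add_eq_mul, add_neg_cancel, AddChar.map_zero_eq_one]
        rw [map_mul, ← AddChar.map_neg_eq_conj, neg_add, AddChar.map_add_eq_mul]
        linear_combination (g x * conj (g (x + h)) * ψ (-h)) * hψ
    _ = ∑ h, (∑ x, g x * conj (g (x + h))) * ψ (-h) := by
        rw [sum_comm]
        simp_rw [sum_mul]

theorem sum_mul_conj_self_eq_card_sub_one [Zero A] {g : A → ℂ} (hg0 : g 0 = 0)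
    (hg : ∀ x ≠ 0, ‖g x‖ = 1) : ∑ x, g x * conj (g x) = Fintype.card A - 1 := by
  classical
  have hterm : ∀ x, g x * conj (g x) = 1 - if x = 0 then 1 else 0 := fun x => by
    by_cases hx : x = 0
    · simp [hx, hg0]
    · simp [hx, mul_conj', hg x hx]
  simp [hterm, sum_sub_distrib]

theorem norm_sum_mul_addChar_sq [AddCommGroup A] {ψ : AddChar A ℂ} (hψ : ψ ≠ 1) {g : A → ℂ}
    (hg0 : g 0 = 0) (hg : ∀ x ≠ 0, ‖g x‖ = 1) (hc : ∀ h ≠ 0, ∑ x, g x * conj (g (x + h)) = -1) :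
    ‖∑ x, g x * ψ x‖ ^ 2 = Fintype.card A := by
  classical
  have hC : ∀ h, ∑ x, g x * conj (g (x + h)) = (if h = 0 then (Fintype.card A : ℂ) else 0) - 1 :=
    fun h => by
      by_cases hh : h = 0
      · simp [hh, sum_mul_conj_self_eq_card_sub_one hg0 hg]
      · simp [hh, hc h hh]
  have hψsum : ∑ h, ψ (-h) = 0 := by
    rw [Fintype.sum_equiv (Equiv.neg A) (fun h => ψ (-h)) ψ fun _ => rfl]
    exact AddChar.sum_eq_zero_of_ne_one hψ
  have hsq : ((‖∑ x, g x * ψ x‖ ^ 2 : ℝ) : ℂ) = Fintype.card A := by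
    rw [ofReal_pow, ← mul_conj', sum_mul_addChar_mul_conj]
    simp [hC, sub_mul, sum_sub_distrib, hψsum]
  exact_mod_cast hsq

open scoped ComplexOrder in
theorem sum_mul_conj_ne_neg_one [Add A] {g : A → ℂ} (hg : ∀ x, g x = 0 ∨ g x = 1) (h : A) :
    ∑ x, g x * conj (g (x + h)) ≠ -1 := by
  have hnonneg : ∀ x, 0 ≤ g x := fun x => by rcases hg x with hx | hx <;> simp [hx]
  have hsum : 0 ≤ ∑ x, g x * conj (g (x + h)) :=
    sum_nonneg fun x _ => mul_nonneg (hnonneg x) (star_nonneg_iff.mpr (hnonneg _))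
  intro hneg
  rw [hneg] at hsum
  exact absurd hsum (by norm_num)

theorem sum_zpow_mul_conj_zpow_eq_ratCast [Add A] {m : ℕ} (hm : 0 < m) {g : A → ℂ}
    (hg : ∀ x, g x ≠ 0 → g x ^ m = 1) {h : A} {q : ℚ}
    (hc : ∑ x, g x * conj (g (x + h)) = q) {j : ℤ} (hj : j.gcd m = 1) (hj0 : j ≠ 0) :
    ∑ x, g x ^ j * conj (g (x + h) ^ j) = q := by
  have hroot : ∀ x ∈ univ.filter (fun x => g x * conj (g (x + h)) ≠ 0),
      (g x * conj (g (x + h))) ^ m = 1 := fun x hx => by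
    obtain ⟨hx, hxh⟩ := mul_ne_zero_iff.mp (mem_filter.mp hx).2
    rw [mul_pow, ← map_pow, hg x hx, hg _ ((_root_.map_ne_zero _).mp hxh), map_one, one_mul]
  rw [← sum_filter_ne_zero] at hc
  have := sum_zpow_eq_ratCast_of_sum_eq _ hm hroot hc hj
  rw [sum_filter_of_ne fun x _ hx => ?_] at this
  · simpa [mul_zpow, map_zpow₀] using this
  · exact fun h0 => hx (by rw [h0, zero_zpow j hj0])

end Autocorrelation

theorem exp_eq_mulShift_stdAddChar {p : ℕ} [NeZero p] (t : ℤ) (x : ZMod p) :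
    Complex.exp (2 * Real.pi * Complex.I * t * x.val / p) =
      (ZMod.stdAddChar (N := p)).mulShift (t : ZMod p) x := by
  have hcast : (t : ZMod p) * x = ((t * x.val : ℤ) : ZMod p) := by
    push_cast
    rw [ZMod.natCast_zmod_val]
  rw [AddChar.mulShift_apply, hcast, ZMod.stdAddChar_coe]
  push_cast
  ring_nf

/-- all `ℚ`-conjugates of the Gauss sum of a function satisfying
Cohn's condition (with nonzero values `m`-th roots of unity) have absolute value
`√p`: for `gcd(j, m) = 1` and `t ≢ 0 (mod p)`,
`|∑ x, (f x)^j e^{2πi t x / p}| = √p`. -/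
theorem gauss_sum_conjugates_abs (p : ℕ) [Fact p.Prime] (m : ℕ) (hm : 0 < m)
    (f : ZMod p → ℂ) (hf0 : f 0 = 0)
    (hfm : ∀ x : ZMod p, x ≠ 0 → f x ^ m = 1)
    (hcohn : ∀ h : ZMod p, h ≠ 0 →
      ∑ x : ZMod p, f x * (starRingEnd ℂ) (f (x + h)) = -1) :
    ∀ j : ℤ, Int.gcd j m = 1 → ∀ t : ℤ, ¬ (p : ℤ) ∣ t →
      ‖∑ x : ZMod p,
          (f x) ^ j * Complex.exp (2 * Real.pi * Complex.I * t * x.val / p)‖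
        = Real.sqrt p := by
  intro j hj t ht
  have hj0 : j ≠ 0 := by
    rintro rfl
    obtain rfl : m = 1 := by simpa using hj
    refine sum_mul_conj_ne_neg_one (fun x => ?_) 1 (hcohn 1 one_ne_zero)
    by_cases hx : x = 0
    · exact .inl (hx ▸ hf0)
    · exact .inr (pow_one (f x) ▸ hfm x hx)
  have hfm' : ∀ x, f x ≠ 0 → f x ^ m = 1 := fun x hx => hfm x (by rintro rfl; exact hx hf0)
  have hψ : (ZMod.stdAddChar (N := p)).mulShift (t : ZMod p) ≠ 1 :=
    ZMod.isPrimitive_stdAddChar p (by rwa [Ne, ZMod.intCast_zmod_eq_zero_iff_dvd])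
  simp_rw [exp_eq_mulShift_stdAddChar]
  rw [← Real.sqrt_sq (norm_nonneg _), norm_sum_mul_addChar_sq hψ (g := fun x => f x ^ j),
    ZMod.card]
  · simp [hf0, zero_zpow j hj0]
  · intro x hx
    rw [norm_zpow, Complex.norm_eq_one_of_pow_eq_one (hfm x hx) hm.ne', one_zpow]
  · intro h hh
    exact_mod_cast sum_zpow_mul_conj_zpow_eq_ratCast hm hfm' (q := -1)
      (by rw [hcohn h hh]; norm_num) hj hj0
end
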